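/- arXiv:1511.02295 — 4 statements merged into one kernel-verified Lean document; each statement's English description precedes it below -/
import Mathlib

section
/- Let f : ℝ → [0,∞] be lower semicontinuous and convex with f(0) < ∞ and f(0) ≠ 1. Then inf_k limsup_{n→∞} (1/n) log ℙ(M_n ∈ V_k(f)) = −∞; that is, I_M(f) = ∞. -/
open MeasureTheory Filter Metric Set
open scoped ENNReal Classical

noncomputable section

/-- Epigraph of an extended-real-valued function on `ℝ`, as a subset of `ℝ²`
(which carries the box metric `dist p q = max |p₁-q₁| |p₂-q₂|`). -/
def epiE (f : ℝ → EReal) : Set (ℝ × ℝ) := {p | f p.1 ≤ (p.2 : EReal)}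

/-- `awGap A B r` is `sup_{x ∈ B̄_r} |dist(x,A) - dist(x,B)|`. -/
def awGap (A B : Set (ℝ × ℝ)) (r : ℝ) : ℝ :=
  sSup ((fun x => |infDist x A - infDist x B|) '' closedBall (0 : ℝ × ℝ) r)

/-- Attouch–Wets convergence of a sequence of functions, via epigraphs. -/
def AWTendsto (F : ℕ → ℝ → EReal) (f : ℝ → EReal) : Prop :=
  ∀ r : ℝ, 0 < r → Tendsto (fun n => awGap (epiE (F n)) (epiE f) r) atTop (nhds 0)

/-- The basic Attouch–Wets neighbourhood `V_k(f)`. -/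
def Vk (k : ℕ) (f : ℝ → EReal) : Set (ℝ → EReal) :=
  {g | awGap (epiE g) (epiE f) (k : ℝ) < 1 / (k : ℝ)}

/-- Convexity for extended-real-valued functions on `ℝ`. -/
def ERConvex (f : ℝ → EReal) : Prop :=
  ∀ x y a b : ℝ, 0 ≤ a → 0 ≤ b → a + b = 1 →
    f (a * x + b * y) ≤ (a : EReal) * f x + (b : EReal) * f y

/-- Effective domain of an extended-real-valued function. -/
def effDom (f : ℝ → EReal) : Set ℝ := {θ | f θ < ⊤}

/-- The moment generating function of a measure on `ℝ`, with values in `(0,∞]`. -/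
def mgfE (ν : Measure ℝ) : ℝ → EReal :=
  fun θ => ((∫⁻ x, ENNReal.ofReal (Real.exp (θ * x)) ∂ν : ℝ≥0∞) : EReal)

/-- `log` of a probability, with the convention `log 0 = -∞`. -/
def elog (p : ℝ≥0∞) : EReal := if p = 0 then ⊥ else ((Real.log p.toReal : ℝ) : EReal)

/-- The empirical moment generating function estimator
`M_n(θ) = (1/n) ∑_{i<n} exp (θ X_i)`. -/
def Mn {Ω : Type*} (X : ℕ → Ω → ℝ) (n : ℕ) (ω : Ω) : ℝ → EReal :=
  fun θ => (((n : ℝ)⁻¹ * ∑ i ∈ Finset.range n, Real.exp (θ * X i ω) : ℝ) : EReal)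

/-- The rate value `I_M(f) = -inf_{k ≥ 1} limsup_n (1/n) log ℙ(M_n ∈ V_k(f))`. -/
def IM {Ω : Type*} [MeasurableSpace Ω] (P : Measure Ω) (X : ℕ → Ω → ℝ)
    (f : ℝ → EReal) : EReal :=
  - ⨅ k ∈ Set.Ici 1, limsup
      (fun n : ℕ => (((n : ℝ)⁻¹ : ℝ) : EReal) * elog (P {ω | Mn X n ω ∈ Vk k f})) atTop

/-- `f` is lower semicontinuous, convex and `[0,∞]`-valued. -/
def IsAdm0 (f : ℝ → EReal) : Prop :=
  LowerSemicontinuous f ∧ ERConvex f ∧ ∀ θ, 0 ≤ f θ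

/-!
For `n ≥ 1` the estimator satisfies `M_n(0) = 1`, so `(0, t) ∈ epi M_n` whenever `t ≥ 1`.

If `f 0 > 1`, take `1 < t < f 0`. The epigraph of the lower semicontinuous `f` is closed, so
`(0, t)` is at positive distance from it, and for large `k` no `M_n` lies in `V_k(f)` at all.

If `f 0 < 1`, take `f 0 < t < 1`. Then `(0, t) ∈ epi f`, so `M_n ∈ V_k(f)` forces
`M_n(θ) < 1 - γ` for some `|θ| < 1/k`. Since `exp u ≥ 1 + u`, at least `γ n / 2` of the terms then
have `θ X_i ≤ -γ/2`, hence `|X_i| > γ k / 2`. By independence this has probability at most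
`(2 μ(|x| > γ k / 2) ^ (γ / 2)) ^ n`, and the base tends to `0` as `k → ∞`.
-/

open ProbabilityTheory Real
open scoped Finset Topology

lemma abs_infDist_sub_le_awGap {A B : Set (ℝ × ℝ)} {r : ℝ} {x : ℝ × ℝ}
    (hx : x ∈ closedBall (0 : ℝ × ℝ) r) :
    |infDist x A - infDist x B| ≤ awGap A B r :=
  le_csSup ((isCompact_closedBall 0 r).bddAbove_image
    ((continuous_infDist_pt A).sub (continuous_infDist_pt B)).abs.continuousOn) ⟨x, hx, rfl⟩

lemma abs_infDist_epiE_sub_lt_of_mem_Vk {k : ℕ} {f g : ℝ → EReal} (hg : g ∈ Vk k f)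
    {x : ℝ × ℝ} (hx : x ∈ closedBall (0 : ℝ × ℝ) k) :
    |infDist x (epiE g) - infDist x (epiE f)| < 1 / k :=
  (abs_infDist_sub_le_awGap hx).trans_lt hg

lemma mk_zero_mem_closedBall {s r : ℝ} (h : |s| ≤ r) :
    ((0 : ℝ), s) ∈ closedBall (0 : ℝ × ℝ) r := by
  simpa [Prod.norm_def] using h

lemma isClosed_epiE {f : ℝ → EReal} (hf : LowerSemicontinuous f) : IsClosed (epiE f) :=
  hf.isClosed_epigraph.preimage
    (continuous_fst.prodMk (continuous_coe_real_ereal.comp continuous_snd))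

lemma Mn_zero {Ω : Type*} (X : ℕ → Ω → ℝ) {n : ℕ} (hn : n ≠ 0) (ω : Ω) : Mn X n ω 0 = 1 := by
  simp [Mn, hn]

lemma mk_mem_epiE_Mn_iff {Ω : Type*} {X : ℕ → Ω → ℝ} {n : ℕ} {ω : Ω} {θ b : ℝ} :
    (θ, b) ∈ epiE (Mn X n ω) ↔ (n : ℝ)⁻¹ * ∑ i ∈ Finset.range n, exp (θ * X i ω) ≤ b :=
  EReal.coe_le_coe_iff

lemma tendsto_measure_compl_closedBall {E : Type*} [MeasurableSpace E] [PseudoMetricSpace E]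
    [CompleteSpace E] [SecondCountableTopology E] [BorelSpace E]
    (μ : Measure E) [IsFiniteMeasure μ] (x : E) :
    Tendsto (fun r : ℝ => μ (closedBall x r)ᶜ) atTop (𝓝 0) := by
  simpa using tendsto_measure_compl_closedBall_of_isTightMeasureSet
    (isTightMeasureSet_singleton (μ := μ)) x

lemma mul_card_le_card_filter_le_neg {ι : Type*} (s : Finset ι) (u : ι → ℝ) {γ : ℝ}
    (hγ : 0 ≤ γ) (h : ∑ i ∈ s, exp (u i) ≤ (1 - γ) * #s) :
    γ / 2 * #s ≤ #{i ∈ s | u i ≤ -(γ / 2)} := by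
  have hcard := s.card_filter_add_card_filter_not (fun i => u i ≤ -(γ / 2))
  have hsplit := s.sum_filter_add_sum_filter_not (fun i => u i ≤ -(γ / 2)) (fun i => exp (u i))
  have hsmall : 0 ≤ ∑ i ∈ s with u i ≤ -(γ / 2), exp (u i) :=
    Finset.sum_nonneg fun i _ => (exp_pos _).le
  have hlarge : #{i ∈ s | ¬u i ≤ -(γ / 2)} • (1 - γ / 2) ≤
      ∑ i ∈ s with ¬u i ≤ -(γ / 2), exp (u i) :=
    Finset.card_nsmul_le_sum _ _ _ fun i hi => by
      linarith [(Finset.mem_filter.mp hi).2, add_one_le_exp (u i)]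
  rw [nsmul_eq_mul] at hlarge
  rw [← hcard, Nat.cast_add] at h ⊢
  nlinarith [mul_nonneg hγ (Nat.cast_nonneg (α := ℝ) #{i ∈ s | u i ≤ -(γ / 2)})]

lemma measure_le_card_filter_mem_le_two_pow_mul {Ω α : Type*} [MeasurableSpace Ω]
    [MeasurableSpace α] {P : Measure Ω} {X : ℕ → Ω → α} {μ : Measure α}
    (hmeas : ∀ i, Measurable (X i)) (hid : ∀ i, Measure.map (X i) P = μ)
    (hindep : iIndepFun X P) {B : Set α} [DecidablePred (· ∈ B)] (hB : MeasurableSet B)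
    (n m : ℕ) :
    P {ω | m ≤ #{i ∈ Finset.range n | X i ω ∈ B}} ≤ 2 ^ n * μ B ^ m := by
  have hsub : {ω | m ≤ #{i ∈ Finset.range n | X i ω ∈ B}} ⊆
      ⋃ T ∈ Finset.powersetCard m (Finset.range n), ⋂ i ∈ T, X i ⁻¹' B := by
    intro ω hω
    obtain ⟨T, hT, rfl⟩ := Finset.exists_subset_card_eq hω
    exact mem_iUnion₂.mpr ⟨T, Finset.mem_powersetCard.mpr ⟨hT.trans (Finset.filter_subset _ _),
      rfl⟩, mem_iInter₂.mpr fun i hi => (Finset.mem_filter.mp (hT hi)).2⟩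
  have hT : ∀ T ∈ Finset.powersetCard m (Finset.range n), P (⋂ i ∈ T, X i ⁻¹' B) = μ B ^ m := by
    intro T hT
    rw [hindep.measure_inter_preimage_eq_mul T (sets := fun _ => B) fun _ _ => hB,
      ← (Finset.mem_powersetCard.mp hT).2, ← Finset.prod_const]
    exact Finset.prod_congr rfl fun i _ => by rw [← hid i, Measure.map_apply (hmeas i) hB]
  calc P {ω | m ≤ #{i ∈ Finset.range n | X i ω ∈ B}}
      ≤ ∑ T ∈ Finset.powersetCard m (Finset.range n), P (⋂ i ∈ T, X i ⁻¹' B) :=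
        (measure_mono hsub).trans (measure_biUnion_finset_le _ _)
    _ = (n.choose m : ℝ≥0∞) * μ B ^ m := by
        rw [Finset.sum_congr rfl hT, Finset.sum_const, Finset.card_powersetCard,
          Finset.card_range, nsmul_eq_mul]
    _ ≤ 2 ^ n * μ B ^ m := by
        gcongr
        exact_mod_cast Nat.choose_le_two_pow n m

lemma inv_mul_elog_le_of_le_pow {p : ℝ≥0∞} {n : ℕ} (hn : n ≠ 0) {r : ℝ}
    (hp : p ≤ ENNReal.ofReal (exp r) ^ n) :
    (((n : ℝ)⁻¹ : ℝ) : EReal) * elog p ≤ r := by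
  have hn' : (0 : ℝ) < n := by positivity
  by_cases hp0 : p = 0
  · rw [hp0, elog, if_pos rfl, EReal.mul_bot_of_pos (by exact_mod_cast inv_pos.mpr hn')]
    exact bot_le
  rw [elog, if_neg hp0, ← EReal.coe_mul, EReal.coe_le_coe_iff, inv_mul_le_iff₀ hn']
  rw [← ENNReal.ofReal_pow (exp_pos r).le] at hp
  have hpos : 0 < p.toReal := ENNReal.toReal_pos hp0 (ne_top_of_le_ne_top ENNReal.ofReal_ne_top hp)
  calc log p.toReal ≤ log (exp r ^ n) :=
        log_le_log hpos (ENNReal.toReal_le_of_le_ofReal (by positivity) hp)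
    _ = n * r := by rw [log_pow, log_exp]

lemma limsup_inv_mul_elog_le {p : ℕ → ℝ≥0∞} {r : ℝ}
    (h : ∀ᶠ n in atTop, p n ≤ ENNReal.ofReal (exp r) ^ n) :
    limsup (fun n : ℕ => (((n : ℝ)⁻¹ : ℝ) : EReal) * elog (p n)) atTop ≤ r :=
  limsup_le_of_le (by isBoundedDefault) <| by
    filter_upwards [h, eventually_ne_atTop 0] with n hp hn using inv_mul_elog_le_of_le_pow hn hp

lemma exists_forall_Mn_notMem_Vk {Ω : Type*} (X : ℕ → Ω → ℝ) {f : ℝ → EReal}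
    (hlsc : LowerSemicontinuous f) (hfin : f 0 < ⊤) (hgt : 1 < f 0) :
    ∃ k : ℕ, 1 ≤ k ∧ ∀ n ≠ 0, ∀ ω, Mn X n ω ∉ Vk k f := by
  obtain ⟨s, hs1, hsf⟩ := EReal.lt_iff_exists_real_btwn.mp hgt
  obtain ⟨b, hb, -⟩ := EReal.lt_iff_exists_real_btwn.mp hfin
  have hη : 0 < infDist ((0 : ℝ), s) (epiE f) :=
    ((isClosed_epiE hlsc).notMem_iff_infDist_pos ⟨(0, b), hb.le⟩).mp hsf.not_ge
  obtain ⟨k, hk1, hks, hkη⟩ : ∃ k : ℕ, 1 ≤ k ∧ |s| ≤ k ∧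
      1 / (k : ℝ) ≤ infDist ((0 : ℝ), s) (epiE f) :=
    ((eventually_ge_atTop 1).and ((tendsto_natCast_atTop_atTop.eventually_ge_atTop |s|).and
      (tendsto_one_div_atTop_nhds_zero_nat.eventually (ge_mem_nhds hη)))).exists
  refine ⟨k, hk1, fun n hn ω hmem => ?_⟩
  have hs : ((0 : ℝ), s) ∈ epiE (Mn X n ω) := by
    change Mn X n ω 0 ≤ (s : EReal)
    rw [Mn_zero X hn]
    exact_mod_cast hs1.le
  have hdist := abs_infDist_epiE_sub_lt_of_mem_Vk hmem (mk_zero_mem_closedBall hks)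
  rw [infDist_zero_of_mem hs, zero_sub, abs_neg, abs_of_nonneg infDist_nonneg] at hdist
  exact hkη.not_gt hdist

lemma lt_abs_of_mul_le_neg {θ x c : ℝ} {k : ℕ} (hθ : |θ| < 1 / k) (hc : 0 < c)
    (h : θ * x ≤ -c) : c * k < |x| := by
  have hk : (0 : ℝ) < k := one_div_pos.mp ((abs_nonneg θ).trans_lt hθ)
  have hx : 0 < |x| := abs_pos.mpr fun hx => by rw [hx, mul_zero] at h; linarith
  have : c < |x| / k :=
    calc c ≤ |θ * x| := by rw [abs_of_nonpos (by linarith)]; linarith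
      _ = |θ| * |x| := abs_mul _ _
      _ < 1 / k * |x| := mul_lt_mul_of_pos_right hθ hx
      _ = |x| / k := by ring
  rwa [lt_div_iff₀ hk] at this

lemma le_card_filter_compl_closedBall_of_Mn_mem_Vk {Ω : Type*} {X : ℕ → Ω → ℝ} {f : ℝ → EReal}
    {k n : ℕ} {ω : Ω} {t γ : ℝ} (hγ : 0 < γ) (hft : f 0 ≤ t) (htk : |t| ≤ k)
    (htγ : t + 1 / k ≤ 1 - γ) (hn : n ≠ 0) (hmem : Mn X n ω ∈ Vk k f) :
    γ / 2 * n ≤ #{i ∈ Finset.range n | X i ω ∈ (closedBall 0 (γ / 2 * k))ᶜ} := by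
  have hd := abs_infDist_epiE_sub_lt_of_mem_Vk hmem (mk_zero_mem_closedBall htk)
  rw [infDist_zero_of_mem (show ((0 : ℝ), t) ∈ epiE f from hft), sub_zero,
    abs_of_nonneg infDist_nonneg] at hd
  obtain ⟨⟨θ, b⟩, hb, hdist⟩ := (infDist_lt_iff ⟨(0, _), mk_mem_epiE_Mn_iff.mpr le_rfl⟩).mp hd
  rw [Prod.dist_eq, max_lt_iff, Real.dist_eq, Real.dist_eq, zero_sub, abs_neg] at hdist
  have hsum : ∑ i ∈ Finset.range n, exp (θ * X i ω) ≤ (1 - γ) * #(Finset.range n) := by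
    have hb' := (inv_mul_le_iff₀ (by positivity)).mp (mk_mem_epiE_Mn_iff.mp hb)
    rw [Finset.card_range, mul_comm]
    nlinarith [abs_lt.mp hdist.2, Nat.cast_nonneg (α := ℝ) n]
  have hcount := mul_card_le_card_filter_le_neg _ _ hγ.le hsum
  rw [Finset.card_range] at hcount
  refine hcount.trans ?_
  have hsub : {i ∈ Finset.range n | θ * X i ω ≤ -(γ / 2)} ⊆
      {i ∈ Finset.range n | X i ω ∈ (closedBall 0 (γ / 2 * k))ᶜ} :=
    Finset.monotone_filter_right _ fun i _ hi => by
      simpa using lt_abs_of_mul_le_neg hdist.1 (half_pos hγ) hi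
  exact_mod_cast Finset.card_le_card hsub

lemma exists_forall_measure_Mn_mem_Vk_le {Ω : Type*} [MeasurableSpace Ω] {P : Measure Ω}
    {X : ℕ → Ω → ℝ} {μ : Measure ℝ} [IsProbabilityMeasure μ]
    (hmeas : ∀ i, Measurable (X i)) (hid : ∀ i, Measure.map (X i) P = μ)
    (hindep : iIndepFun X P) {f : ℝ → EReal} (hlt : f 0 < 1) (r : ℝ) :
    ∃ k : ℕ, 1 ≤ k ∧ ∀ n ≠ 0, P {ω | Mn X n ω ∈ Vk k f} ≤ ENNReal.ofReal (exp r) ^ n := by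
  obtain ⟨t, hft, ht1⟩ := EReal.lt_iff_exists_real_btwn.mp hlt
  have ht1 : t < 1 := by exact_mod_cast ht1
  obtain ⟨γ, hγ, htγ⟩ : ∃ γ : ℝ, 0 < γ ∧ t + γ = 1 - γ := ⟨(1 - t) / 2, by linarith, by ring⟩
  set B : ℕ → Set ℝ := fun k => (closedBall 0 (γ / 2 * k))ᶜ
  have hB : Tendsto (fun k : ℕ => 2 * μ (B k) ^ (γ / 2)) atTop (𝓝 0) := by
    have hμ := (tendsto_measure_compl_closedBall μ 0).comp
      (tendsto_natCast_atTop_atTop.const_mul_atTop (half_pos hγ))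
    simpa [ENNReal.zero_rpow_of_pos (half_pos hγ)] using ENNReal.Tendsto.const_mul
      ((ENNReal.continuous_rpow_const (y := γ / 2)).tendsto 0 |>.comp hμ)
      (Or.inr (ENNReal.ofNat_ne_top (n := 2)))
  obtain ⟨k, hk1, hkt, hkγ, hkB⟩ : ∃ k : ℕ, 1 ≤ k ∧ |t| ≤ k ∧ 1 / (k : ℝ) ≤ γ ∧
      2 * μ (B k) ^ (γ / 2) ≤ ENNReal.ofReal (exp r) :=
    ((eventually_ge_atTop 1).and ((tendsto_natCast_atTop_atTop.eventually_ge_atTop |t|).and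
      ((tendsto_one_div_atTop_nhds_zero_nat.eventually (ge_mem_nhds hγ)).and
      (hB.eventually (ge_mem_nhds (ENNReal.ofReal_pos.mpr (exp_pos r))))))).exists
  refine ⟨k, hk1, fun n hn => ?_⟩
  calc P {ω | Mn X n ω ∈ Vk k f}
      ≤ P {ω | ⌈γ / 2 * n⌉₊ ≤ #{i ∈ Finset.range n | X i ω ∈ B k}} :=
        measure_mono fun ω hω => Nat.ceil_le.mpr <|
          le_card_filter_compl_closedBall_of_Mn_mem_Vk hγ hft.le hkt (by linarith) hn hω
    _ ≤ 2 ^ n * μ (B k) ^ ⌈γ / 2 * n⌉₊ :=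
        measure_le_card_filter_mem_le_two_pow_mul hmeas hid hindep
          measurableSet_closedBall.compl _ _
    _ ≤ 2 ^ n * (μ (B k) ^ (γ / 2)) ^ n := by
        have hpow : μ (B k) ^ ⌈γ / 2 * n⌉₊ ≤ (μ (B k) ^ (γ / 2)) ^ n := by
          rw [← ENNReal.rpow_natCast, ← ENNReal.rpow_mul_natCast]
          exact ENNReal.rpow_le_rpow_of_exponent_ge prob_le_one (Nat.le_ceil _)
        gcongr
    _ = (2 * μ (B k) ^ (γ / 2)) ^ n := (mul_pow _ _ _).symm
    _ ≤ ENNReal.ofReal (exp r) ^ n := by gcongr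

theorem infinite_rate_of_ne_one_general
    {Ω : Type*} [MeasurableSpace Ω] (P : Measure Ω)
    (X : ℕ → Ω → ℝ) (μ : Measure ℝ) [IsProbabilityMeasure μ]
    (hmeas : ∀ i, Measurable (X i))
    (hid : ∀ i, Measure.map (X i) P = μ)
    (hindep : ProbabilityTheory.iIndepFun X P)
    (f : ℝ → EReal) (hlsc : LowerSemicontinuous f)
    (hfin : f 0 < ⊤) (hne : f 0 ≠ 1) :
    (⨅ k ∈ Set.Ici 1, limsup
        (fun n : ℕ => (((n : ℝ)⁻¹ : ℝ) : EReal) *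
          elog (P {ω | Mn X n ω ∈ Vk k f})) atTop) = ⊥ ∧
    IM P X f = ⊤ := by
  have key : ∀ r : ℝ, ∃ k ∈ Set.Ici 1,
      ∀ᶠ n in atTop, P {ω | Mn X n ω ∈ Vk k f} ≤ ENNReal.ofReal (exp r) ^ n := by
    intro r
    rcases hne.lt_or_gt with hlt | hgt
    · obtain ⟨k, hk, hbound⟩ := exists_forall_measure_Mn_mem_Vk_le hmeas hid hindep hlt r
      exact ⟨k, hk, (eventually_ne_atTop 0).mono hbound⟩
    · obtain ⟨k, hk, hnot⟩ := exists_forall_Mn_notMem_Vk X hlsc hfin hgt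
      refine ⟨k, hk, (eventually_ne_atTop 0).mono fun n hn => ?_⟩
      simp [hnot n hn]
  have hbot : (⨅ k ∈ Set.Ici 1, limsup
      (fun n : ℕ => (((n : ℝ)⁻¹ : ℝ) : EReal) *
        elog (P {ω | Mn X n ω ∈ Vk k f})) atTop) = ⊥ := by
    refine (EReal.eq_bot_iff_forall_lt _).mpr fun r => ?_
    obtain ⟨k, hk, hbound⟩ := key (r - 1)
    exact ((iInf₂_le k hk).trans (limsup_inv_mul_elog_le hbound)).trans_lt
      (EReal.coe_lt_coe_iff.mpr (sub_one_lt r))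
  exact ⟨hbot, by rw [IM, hbot]; rfl⟩

/-- Functions whose value at the origin is not `1` have infinite rate. -/
theorem infinite_rate_of_ne_one
    {Ω : Type*} [MeasurableSpace Ω] (P : Measure Ω) [IsProbabilityMeasure P]
    (X : ℕ → Ω → ℝ) (μ : Measure ℝ) [IsProbabilityMeasure μ]
    (hmeas : ∀ i, Measurable (X i))
    (hid : ∀ i, Measure.map (X i) P = μ)
    (hindep : ProbabilityTheory.iIndepFun X P)
    (f : ℝ → EReal) (hlsc : LowerSemicontinuous f) (hconv : ERConvex f)
    (hnn : ∀ θ, 0 ≤ f θ) (hfin : f 0 < ⊤) (hne : f 0 ≠ 1) :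
    (⨅ k ∈ Set.Ici 1, limsup
        (fun n : ℕ => (((n : ℝ)⁻¹ : ℝ) : EReal) *
          elog (P {ω | Mn X n ω ∈ Vk k f})) atTop) = ⊥ ∧
    IM P X f = ⊤ :=
  infinite_rate_of_ne_one_general P X μ hmeas hid hindep f hlsc hfin hne

end
end

section
/- Every sequence {f_n} of lower semicontinuous convex functions f_n : ℝ → [0,∞] with f_n(0) ≤ 1 has a subsequence that converges in the Attouch-Wets sense to a lower semicontinuous convex function f : ℝ → [0,∞] with f(0) ≤ 1. -/
open MeasureTheory Filter Metric Set
open scoped ENNReal Classical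

noncomputable section

open scoped Topology

namespace AWAux

lemma epi_up {f : ℝ → EReal} {x b b' : ℝ} (h : (x, b) ∈ epiE f) (hbb : b ≤ b') :
    (x, b') ∈ epiE f := by
  have : ((b:ℝ) : EReal) ≤ ((b':ℝ) : EReal) := by exact_mod_cast hbb
  exact le_trans h this

lemma epi_snd {f : ℝ → EReal} (hf : ∀ θ, 0 ≤ f θ) {p : ℝ × ℝ} (hp : p ∈ epiE f) : 0 ≤ p.2 := by
  have : ((0:ℝ) : EReal) ≤ (p.2 : EReal) := le_trans (by simpa using hf p.1) hp
  exact_mod_cast this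

lemma epi_convex {f : ℝ → EReal} (hf : ERConvex f) : Convex ℝ (epiE f) := by
  intro p hp q hq a b ha hb hab
  have h1 := hf p.1 q.1 a b ha hb hab
  have h2 : (a : EReal) * f p.1 ≤ (a : EReal) * (p.2 : EReal) :=
    mul_le_mul_of_nonneg_left hp (by exact_mod_cast ha)
  have h3 : (b : EReal) * f q.1 ≤ (b : EReal) * (q.2 : EReal) :=
    mul_le_mul_of_nonneg_left hq (by exact_mod_cast hb)
  have key : f (a * p.1 + b * q.1) ≤ ((a * p.2 + b * q.2 : ℝ) : EReal) := by
    push_cast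
    exact h1.trans (add_le_add h2 h3)
  show f ((a • p + b • q).1) ≤ (((a • p + b • q).2 : ℝ) : EReal)
  simpa [Prod.fst_add, Prod.snd_add, smul_eq_mul] using key

/-- monotonicity of infDist in the vertical direction, for upward-closed sets -/
lemma infDist_vert {A : Set (ℝ × ℝ)} (hA : A.Nonempty)
    (hup : ∀ x b b', (x, b) ∈ A → b ≤ b' → (x, b') ∈ A)
    {x b b' : ℝ} (h : b ≤ b') : infDist (x, b') A ≤ infDist (x, b) A := by
  refine le_of_forall_pos_le_add fun ε hε => ?_
  obtain ⟨p, hpA, hpd⟩ := (infDist_lt_iff hA).1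
    (lt_add_of_pos_right (infDist (x, b) A) hε)
  have hq : (p.1, max p.2 b') ∈ A := hup p.1 p.2 _ (by simpa using hpA) (le_max_left _ _)
  have hdist : dist (x, b') (p.1, max p.2 b') ≤ dist (x, b) p := by
    rw [Prod.dist_eq, Prod.dist_eq]
    refine max_le_max le_rfl ?_
    rw [Real.dist_eq, Real.dist_eq]
    rcases le_total p.2 b' with hc | hc
    · simp [max_eq_right hc, abs_nonneg]
    · rw [max_eq_left hc, abs_of_nonpos (by linarith), abs_of_nonpos (by linarith)]
      linarith
  calc infDist (x, b') A ≤ dist (x, b') (p.1, max p.2 b') := infDist_le_dist_of_mem hq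
    _ ≤ dist (x, b) p := hdist
    _ ≤ infDist (x, b) A + ε := hpd.le

/-- convexity of infDist for convex sets -/
lemma infDist_combo {A : Set (ℝ × ℝ)} (hA : A.Nonempty) (hconv : Convex ℝ A)
    {a b : ℝ} (ha : 0 ≤ a) (hb : 0 ≤ b) (hab : a + b = 1) (x y : ℝ × ℝ) :
    infDist (a • x + b • y) A ≤ a * infDist x A + b * infDist y A := by
  refine le_of_forall_pos_le_add fun ε hε => ?_
  obtain ⟨p, hpA, hpd⟩ := (infDist_lt_iff hA).1 (lt_add_of_pos_right (infDist x A) hε)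
  obtain ⟨q, hqA, hqd⟩ := (infDist_lt_iff hA).1 (lt_add_of_pos_right (infDist y A) hε)
  have hmem : a • p + b • q ∈ A := hconv hpA hqA ha hb hab
  have hd : dist (a • x + b • y) (a • p + b • q) ≤ a * dist x p + b * dist y q := by
    rw [dist_eq_norm]
    have : a • x + b • y - (a • p + b • q) = a • (x - p) + b • (y - q) := by
      module
    rw [this]
    calc ‖a • (x - p) + b • (y - q)‖ ≤ ‖a • (x - p)‖ + ‖b • (y - q)‖ := norm_add_le _ _
      _ = a * dist x p + b * dist y q := by
          rw [norm_smul, norm_smul, Real.norm_eq_abs, Real.norm_eq_abs,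
            abs_of_nonneg ha, abs_of_nonneg hb, dist_eq_norm, dist_eq_norm]
  calc infDist (a • x + b • y) A ≤ dist (a • x + b • y) (a • p + b • q) :=
        infDist_le_dist_of_mem hmem
    _ ≤ a * dist x p + b * dist y q := hd
    _ ≤ a * (infDist x A + ε) + b * (infDist y A + ε) := by
        exact add_le_add (mul_le_mul_of_nonneg_left hpd.le ha)
          (mul_le_mul_of_nonneg_left hqd.le hb)
    _ = a * infDist x A + b * infDist y A + ε := by ring_nf; nlinarith [hab]

/-- lower bound on infDist from below -/
lemma infDist_lb {A : Set (ℝ × ℝ)} (hA : A.Nonempty) (hpos : ∀ p ∈ A, (0:ℝ) ≤ p.2)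
    (x b : ℝ) : -b ≤ infDist (x, b) A := by
  by_contra hcon
  push_neg at hcon
  obtain ⟨p, hpA, hpd⟩ := (infDist_lt_iff hA).1 hcon
  have h1 : dist b p.2 ≤ dist (x, b) p := by
    rw [Prod.dist_eq]; exact le_max_right _ _
  have h2 : p.2 - b ≤ dist b p.2 := by
    rw [Real.dist_eq]; rw [abs_sub_comm]; exact le_abs_self _
  have := hpos p hpA
  linarith [h1.trans hpd.le]

end AWAux

theorem compactness'
    (F : ℕ → ℝ → EReal)
    (hF : ∀ n, LowerSemicontinuous (F n) ∧ ERConvex (F n) ∧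
      (∀ θ, 0 ≤ F n θ) ∧ F n 0 ≤ 1) :
    ∃ φ : ℕ → ℕ, StrictMono φ ∧ ∃ f : ℝ → EReal,
      LowerSemicontinuous f ∧ ERConvex f ∧ (∀ θ, 0 ≤ f θ) ∧ f 0 ≤ 1 ∧
      ∀ r : ℝ, 0 < r → Tendsto (fun n =>
        sSup ((fun x => |infDist x (epiE (F (φ n))) - infDist x (epiE f)|) ''
          closedBall (0 : ℝ × ℝ) r)) atTop (nhds 0) := by
  classical
  obtain ⟨u, hu⟩ := TopologicalSpace.exists_dense_seq (ℝ × ℝ)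
  set z : ℝ × ℝ := ((0:ℝ), (1:ℝ)) with hz
  have hone : ∀ n, z ∈ epiE (F n) := by
    intro n
    show F n 0 ≤ ((1:ℝ) : EReal)
    simpa using (hF n).2.2.2
  have hEne : ∀ n, (epiE (F n)).Nonempty := fun n => ⟨z, hone n⟩
  set d : ℕ → ℝ × ℝ → ℝ := fun n x => infDist x (epiE (F n)) with hd
  have hd_lip : ∀ n x y, dist (d n x) (d n y) ≤ dist x y := by
    intro n x y
    simpa using (lipschitz_infDist_pt (epiE (F n))).dist_le_mul x y
  have hd_nonneg : ∀ n x, 0 ≤ d n x := fun n x => infDist_nonneg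
  have hd_bound : ∀ n x, d n x ≤ dist x z := fun n x => infDist_le_dist_of_mem (hone n)
  have hd_z : ∀ n, d n z = 0 := fun n => infDist_zero_of_mem (hone n)
  -- extract a subsequence converging at all the dense points
  have hK : IsCompact (Set.pi (Set.univ : Set ℕ) fun k => Icc (0:ℝ) (dist (u k) z)) :=
    isCompact_univ_pi fun k => isCompact_Icc
  have hymem : ∀ n, (fun k => d n (u k)) ∈ Set.pi Set.univ fun k => Icc (0:ℝ) (dist (u k) z) := by
    intro n k _
    exact ⟨hd_nonneg n _, hd_bound n _⟩
  obtain ⟨L, -, φ, hφ, hL⟩ := hK.tendsto_subseq hymem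
  have hLk : ∀ k, Tendsto (fun n => d (φ n) (u k)) atTop (𝓝 (L k)) := fun k =>
    tendsto_pi_nhds.1 hL k
  -- pointwise convergence everywhere
  have hconv : ∀ x, ∃ l, Tendsto (fun n => d (φ n) x) atTop (𝓝 l) := by
    intro x
    apply cauchySeq_tendsto_of_complete
    rw [Metric.cauchySeq_iff]
    intro ε hε
    obtain ⟨k, hk⟩ := hu.exists_dist_lt x (show (0:ℝ) < ε/4 by positivity)
    have hC : CauchySeq fun n => d (φ n) (u k) := (hLk k).cauchySeq
    rw [Metric.cauchySeq_iff] at hC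
    obtain ⟨N, hN⟩ := hC (ε/2) (by positivity)
    refine ⟨N, fun m hm n hn => ?_⟩
    have t4 := dist_triangle4 (d (φ m) x) (d (φ m) (u k)) (d (φ n) (u k)) (d (φ n) x)
    have h1 := hd_lip (φ m) x (u k)
    have h2 := hd_lip (φ n) (u k) x
    rw [dist_comm (u k) x] at h2
    have h3 := hN m hm n hn
    exact lt_of_le_of_lt t4 (by linarith)
  choose g hg using hconv
  have hg_lipd : ∀ x y, dist (g x) (g y) ≤ dist x y := fun x y =>
    le_of_tendsto ((hg x).dist (hg y)) (Eventually.of_forall fun n => hd_lip (φ n) x y)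
  have hg_cont : Continuous g :=
    (LipschitzWith.of_dist_le_mul (K := 1) fun x y => by simpa using hg_lipd x y).continuous
  have hg_nonneg : ∀ x, 0 ≤ g x := fun x => ge_of_tendsto' (hg x) fun n => hd_nonneg _ _
  have hg_z : g z = 0 := by
    have h0 : Tendsto (fun n => d (φ n) z) atTop (𝓝 0) := by
      simpa [hd_z] using (tendsto_const_nhds : Tendsto (fun _ : ℕ => (0:ℝ)) atTop (𝓝 0))
    exact tendsto_nhds_unique (hg z) h0
  have hEup : ∀ n, ∀ x b b', (x, b) ∈ epiE (F n) → b ≤ b' → (x, b') ∈ epiE (F n) :=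
    fun n x b b' h hb => AWAux.epi_up h hb
  have hg_vert : ∀ x b b', b ≤ b' → g (x, b') ≤ g (x, b) := by
    intro x b b' hbb
    exact le_of_tendsto_of_tendsto' (hg (x, b')) (hg (x, b)) fun n =>
      AWAux.infDist_vert (hEne _) (hEup _) hbb
  have hg_lb : ∀ x b, -b ≤ g (x, b) := fun x b =>
    ge_of_tendsto' (hg (x, b)) fun n =>
      AWAux.infDist_lb (hEne _) (fun p hp => AWAux.epi_snd (hF _).2.2.1 hp) x b
  have hg_convex : ∀ (a b : ℝ) (x y : ℝ × ℝ), 0 ≤ a → 0 ≤ b → a + b = 1 →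
      g (a • x + b • y) ≤ a * g x + b * g y := by
    intro a b x y ha hb hab
    exact le_of_tendsto_of_tendsto' (hg _)
      (((hg x).const_mul a).add ((hg y).const_mul b)) fun n =>
      AWAux.infDist_combo (hEne _) (AWAux.epi_convex (hF _).2.1) ha hb hab x y
  -- the limit set
  set S : Set (ℝ × ℝ) := {p | g p = 0} with hSdef
  have hS_closed : IsClosed S := isClosed_eq hg_cont continuous_const
  have hS_z : z ∈ S := hg_z
  have hS_ne : S.Nonempty := ⟨z, hS_z⟩
  have hS_vert : ∀ x b b', (x, b) ∈ S → b ≤ b' → (x, b') ∈ S := by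
    intro x b b' hmem hbb
    have h1 : g (x, b') ≤ 0 := by
      calc g (x, b') ≤ g (x, b) := hg_vert x b b' hbb
        _ = 0 := hmem
    exact le_antisymm h1 (hg_nonneg _)
  have hS_snd : ∀ p ∈ S, (0:ℝ) ≤ p.2 := by
    intro p hp
    have h1 : -p.2 ≤ g (p.1, p.2) := hg_lb p.1 p.2
    have h2 : g (p.1, p.2) = 0 := hp
    linarith
  have hS_convex : Convex ℝ S := by
    intro p hp q hq a b ha hb hab
    have h := hg_convex a b p q ha hb hab
    have h1 : g (a • p + b • q) ≤ 0 := by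
      rw [show g p = 0 from hp, show g q = 0 from hq] at h
      simpa using h
    exact le_antisymm h1 (hg_nonneg _)
  -- g is the distance function of S
  have hgS : ∀ x, g x = infDist x S := by
    intro x
    refine le_antisymm ?_ ?_
    · by_contra hcon
      push_neg at hcon
      obtain ⟨p, hpS, hpd⟩ := (infDist_lt_iff hS_ne).1 hcon
      have h1 : g x - g p ≤ dist x p := by
        have h2 := hg_lipd x p
        rw [Real.dist_eq] at h2
        linarith [le_abs_self (g x - g p)]
      rw [show g p = 0 from hpS] at h1
      linarith
    · have hsel : ∀ n : ℕ, ∃ p, p ∈ epiE (F (φ n)) ∧ dist x p < d (φ n) x + 1/(n+1) := by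
        intro n
        have hlt : infDist x (epiE (F (φ n))) < d (φ n) x + 1/(n+1) := by
          have hpos : (0:ℝ) < 1/((n:ℝ)+1) := by positivity
          have : d (φ n) x = infDist x (epiE (F (φ n))) := rfl
          push_cast
          linarith [this.ge]
        exact (infDist_lt_iff (hEne _)).1 hlt
      choose p hpmem hpd using hsel
      have hpb : ∀ n, p n ∈ closedBall x (dist x z + 1) := by
        intro n
        rw [mem_closedBall, dist_comm]
        have h1 := hpd n
        have h2 := hd_bound (φ n) x
        have h3 : 1/((n:ℝ)+1) ≤ 1 := by
          rw [div_le_one (by positivity)]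
          linarith [Nat.cast_nonneg (α := ℝ) n]
        push_cast at h1
        linarith
      obtain ⟨a, -, ψ, hψ, hpa⟩ := tendsto_subseq_of_bounded isBounded_closedBall hpb
      have hψtop : Tendsto ψ atTop atTop := hψ.tendsto_atTop
      have hinv : Tendsto (fun n => 1/((ψ n : ℝ)+1)) atTop (𝓝 0) :=
        tendsto_one_div_add_atTop_nhds_zero_nat.comp hψtop
      have hdx : Tendsto (fun n => d (φ (ψ n)) x) atTop (𝓝 (g x)) := (hg x).comp hψtop
      have hdist_a : dist x a ≤ g x := by
        have hT : Tendsto (fun n => dist x (p (ψ n))) atTop (𝓝 (dist x a)) :=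
          tendsto_const_nhds.dist hpa
        have hR : Tendsto (fun n => d (φ (ψ n)) x + 1/((ψ n : ℝ)+1)) atTop (𝓝 (g x)) := by
          simpa using hdx.add hinv
        refine le_of_tendsto_of_tendsto' hT hR fun n => ?_
        have := (hpd (ψ n)).le
        push_cast at this ⊢
        linarith
      have hga : a ∈ S := by
        have h1 : g a ≤ 0 := by
          have hda : Tendsto (fun n => d (φ (ψ n)) a) atTop (𝓝 (g a)) := (hg a).comp hψtop
          have hdistA : Tendsto (fun n => dist a (p (ψ n))) atTop (𝓝 0) := by
            have h5 := (tendsto_const_nhds : Tendsto (fun _ : ℕ => a) atTop (𝓝 a)).dist hpa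
            simpa [dist_self] using h5
          exact le_of_tendsto_of_tendsto' hda hdistA fun n =>
            infDist_le_dist_of_mem (hpmem (ψ n))
        exact le_antisymm h1 (hg_nonneg a)
      calc infDist x S ≤ dist x a := infDist_le_dist_of_mem hga
        _ ≤ g x := hdist_a
  -- the limit function
  set Sl : ℝ → Set ℝ := fun t => {c | (t, c) ∈ S} with hSl
  have hSl_closed : ∀ t, IsClosed (Sl t) :=
    fun t => hS_closed.preimage (Continuous.prodMk_right t)
  have hSl_bdd : ∀ t, BddBelow (Sl t) := fun t => ⟨0, fun c hc => hS_snd _ hc⟩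
  set f : ℝ → EReal := fun t => if h : (Sl t).Nonempty then ((sInf (Sl t) : ℝ) : EReal) else ⊤
    with hf_def
  have hmemInf : ∀ t, (Sl t).Nonempty → sInf (Sl t) ∈ Sl t := fun t h =>
    (hSl_closed t).csInf_mem h (hSl_bdd t)
  have h_epi : epiE f = S := by
    ext p
    obtain ⟨t, c⟩ := p
    show f t ≤ (c : EReal) ↔ (t, c) ∈ S
    by_cases h : (Sl t).Nonempty
    · simp only [hf_def, dif_pos h]
      rw [EReal.coe_le_coe_iff]
      constructor
      · intro hle
        exact hS_vert t _ c (hmemInf t h) hle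
      · intro hmem
        exact csInf_le (hSl_bdd t) hmem
    · simp only [hf_def, dif_neg h]
      constructor
      · intro htop
        exact absurd (top_le_iff.1 htop) (EReal.coe_ne_top c)
      · intro hmem
        exact absurd ⟨c, hmem⟩ h
  have h_lsc : LowerSemicontinuous f := by
    intro t y hy
    obtain ⟨w, hyw, hwf⟩ := exists_between hy
    induction w using EReal.rec with
    | bot => exact absurd hyw (by simp)
    | top => exact absurd hwf (by simp)
    | coe c =>
      have hnot : (t, c) ∉ S := by
        intro hmem
        rw [← h_epi] at hmem
        exact absurd (show f t ≤ (c : EReal) from hmem) (not_le.2 hwf)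
      have hopen : IsOpen {t' : ℝ | (t', c) ∉ S} := by
        have hcl : IsClosed {t' : ℝ | (t', c) ∈ S} :=
          hS_closed.preimage (continuous_id.prodMk continuous_const)
        exact hcl.isOpen_compl
      filter_upwards [hopen.mem_nhds hnot] with t' ht'
      have h1 : ¬ f t' ≤ (c : EReal) := fun hle => ht' (h_epi ▸ hle)
      exact hyw.trans (not_le.1 h1)
  have h_nonneg : ∀ θ, 0 ≤ f θ := by
    intro θ
    by_cases h : (Sl θ).Nonempty
    · simp only [hf_def, dif_pos h]
      have h0 : (0:ℝ) ≤ sInf (Sl θ) := le_csInf h fun c hc => hS_snd _ hc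
      exact_mod_cast h0
    · simp only [hf_def, dif_neg h]
      exact le_top
  have h_f0 : f 0 ≤ 1 := by
    have hm : z ∈ epiE f := h_epi ▸ hS_z
    have h1 : f 0 ≤ ((1:ℝ) : EReal) := hm
    simpa using h1
  have h_fin : ∀ t, f t ≠ ⊤ → ∃ rt : ℝ, f t = (rt : EReal) ∧ (t, rt) ∈ S := by
    intro t ht
    by_cases h : (Sl t).Nonempty
    · exact ⟨sInf (Sl t), by simp only [hf_def, dif_pos h], hmemInf t h⟩
    · exact absurd (by simp only [hf_def, dif_neg h]) ht
  have h_conv : ERConvex f := by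
    intro x y a b ha hb hab
    rcases eq_or_lt_of_le ha with ha0 | hapos
    · have hb1 : b = 1 := by linarith
      subst hb1
      rw [← ha0]
      simp
    rcases eq_or_lt_of_le hb with hb0 | hbpos
    · have ha1 : a = 1 := by linarith
      subst ha1
      rw [← hb0]
      simp
    by_cases hfx : f x = ⊤
    · rw [hfx, EReal.mul_top_of_pos (by exact_mod_cast hapos)]
      have h2 : (⊥ : EReal) < (b : EReal) * f y := by
        refine lt_of_lt_of_le ?_ (mul_le_mul_of_nonneg_left (h_nonneg y) (by exact_mod_cast hb))
        simp
      rw [EReal.top_add_of_ne_bot h2.ne']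
      exact le_top
    by_cases hfy : f y = ⊤
    · rw [hfy, EReal.mul_top_of_pos (by exact_mod_cast hbpos)]
      have h2 : (⊥ : EReal) < (a : EReal) * f x := by
        refine lt_of_lt_of_le ?_ (mul_le_mul_of_nonneg_left (h_nonneg x) (by exact_mod_cast ha))
        simp
      rw [EReal.add_top_of_ne_bot h2.ne']
      exact le_top
    obtain ⟨rx, hrx, hrxS⟩ := h_fin x hfx
    obtain ⟨ry, hry, hryS⟩ := h_fin y hfy
    have hcombo : (a * x + b * y, a * rx + b * ry) ∈ S := by
      have h := hS_convex hrxS hryS ha hb hab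
      simpa [Prod.smul_mk, Prod.mk_add_mk, smul_eq_mul] using h
    rw [← h_epi] at hcombo
    have h1 : f (a * x + b * y) ≤ ((a * rx + b * ry : ℝ) : EReal) := hcombo
    rw [hrx, hry]
    push_cast at h1 ⊢
    exact h1
  -- Attouch-Wets convergence
  refine ⟨φ, hφ, f, h_lsc, h_conv, h_nonneg, h_f0, ?_⟩
  intro r hr
  have hrw : ∀ n, (fun x => |infDist x (epiE (F (φ n))) - infDist x (epiE f)|) =
      fun x : ℝ × ℝ => |d (φ n) x - g x| := by
    intro n
    funext x
    rw [h_epi, ← hgS x]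
  rw [Metric.tendsto_atTop]
  intro ε hε
  obtain ⟨T, hTsub, hTfin, hTcover⟩ :=
    (isCompact_closedBall (0 : ℝ × ℝ) r).elim_finite_subcover_image
      (fun i (_ : i ∈ closedBall (0:ℝ×ℝ) r) => isOpen_ball (x := i) (ε := ε/8))
      (fun x hx => mem_biUnion hx (mem_ball_self (by positivity)))
  have hev : ∀ᶠ n in atTop, ∀ i ∈ T, |d (φ n) i - g i| < ε/4 := by
    rw [eventually_all_finite hTfin]
    intro i _
    have hti : Tendsto (fun n => |d (φ n) i - g i|) atTop (𝓝 0) := by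
      have h1 := ((hg i).sub (tendsto_const_nhds : Tendsto (fun _ : ℕ => g i) atTop (𝓝 (g i)))).abs
      simpa using h1
    exact hti.eventually_lt_const (by positivity)
  obtain ⟨N, hN⟩ := eventually_atTop.1 hev
  refine ⟨N, fun n hn => ?_⟩
  rw [hrw n]
  have hub : ∀ v ∈ (fun x : ℝ × ℝ => |d (φ n) x - g x|) '' closedBall 0 r, v ≤ ε/2 := by
    rintro v ⟨x, hx, rfl⟩
    obtain ⟨i, hiT, hxi⟩ := mem_iUnion₂.1 (hTcover hx)
    have hxi' : dist x i < ε/8 := mem_ball.1 hxi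
    have hi4 := hN n hn i hiT
    have t4 := dist_triangle4 (d (φ n) x) (d (φ n) i) (g i) (g x)
    have e1 : dist (d (φ n) x) (g x) = |d (φ n) x - g x| := Real.dist_eq _ _
    have e2 : dist (d (φ n) i) (g i) = |d (φ n) i - g i| := Real.dist_eq _ _
    have l1 := hd_lip (φ n) x i
    have l2 := hg_lipd i x
    rw [dist_comm i x] at l2
    rw [e1, e2] at t4
    linarith
  have himg_ne : ((fun x : ℝ × ℝ => |d (φ n) x - g x|) '' closedBall 0 r).Nonempty :=
    ⟨_, mem_image_of_mem _ (mem_closedBall_self hr.le)⟩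
  have hsup_le : sSup ((fun x : ℝ × ℝ => |d (φ n) x - g x|) '' closedBall 0 r) ≤ ε/2 :=
    csSup_le himg_ne hub
  have hsup_ge : 0 ≤ sSup ((fun x : ℝ × ℝ => |d (φ n) x - g x|) '' closedBall 0 r) := by
    refine le_trans (abs_nonneg (d (φ n) 0 - g 0)) ?_
    exact le_csSup ⟨ε/2, hub⟩ (mem_image_of_mem _ (mem_closedBall_self hr.le))
  rw [Real.dist_eq, sub_zero, abs_of_nonneg hsup_ge]
  linarith


/-- Compactness: every sequence of lower semicontinuous convex `[0,∞]`-valued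
functions with value at most `1` at the origin has an Attouch–Wets convergent
subsequence with limit in the same class. -/
theorem compactness
    (F : ℕ → ℝ → EReal)
    (hF : ∀ n, LowerSemicontinuous (F n) ∧ ERConvex (F n) ∧
      (∀ θ, 0 ≤ F n θ) ∧ F n 0 ≤ 1) :
    ∃ φ : ℕ → ℕ, StrictMono φ ∧ ∃ f : ℝ → EReal,
      LowerSemicontinuous f ∧ ERConvex f ∧ (∀ θ, 0 ≤ f θ) ∧ f 0 ≤ 1 ∧
      AWTendsto (fun n => F (φ n)) f := by
  obtain ⟨φ, hφ, f, h1, h2, h3, h4, h5⟩ := compactness' F hF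
  exact ⟨φ, hφ, f, h1, h2, h3, h4, fun r hr => h5 r hr⟩

end
end

section
/- Let f_n (n ∈ ℕ) and f be lower semicontinuous convex functions ℝ → (0,∞] with f_n(0) = f(0) = 1. If f_n converges to f in the Attouch-Wets sense, then log∘f_n converges to log∘f in the Attouch-Wets sense (as lower semicontinuous functions ℝ → (−∞,∞], with log ∞ = ∞). -/
open MeasureTheory Filter Metric Set
open scoped ENNReal Classical

noncomputable section

/-- `log : (−∞,∞] → [−∞,∞]`, with `log ∞ = ∞` and `log x = -∞` for `x ≤ 0`. -/
def logE (x : EReal) : EReal :=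
  if x = ⊤ then ⊤ else if x ≤ 0 then ⊥ else ((Real.log x.toReal : ℝ) : EReal)

/-! The map `Φ (θ, b) = (θ, exp b)` carries `epi (log ∘ g)` onto `epi g` for positive `g`, and
`(θ, t) ↦ (θ, log t)` undoes it. Since `g 0 = 1`, the origin lies in `epi (log ∘ g)`, so the
points of `epi (log ∘ g)` that matter for `x ∈ B̄_r` lie in `B̄_{2r+1}`; `Φ` sends them into
`B̄_{exp (2r+1)}` with second coordinate at least `exp (-(2r+1))`. There a point of `epi g` is
`δ`-close to a point of `epi h`, whose second coordinate then stays away from `0`, where `log` is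
Lipschitz; pulling back gives a point of `epi (log ∘ h)` at distance `≤ 2 exp (2r+1) δ`. -/

open Real

theorem infDist_le_infDist_add_of_forall_near {E : Type*} [PseudoMetricSpace E] {A B : Set E}
    {a x : E} {r ρ ε : ℝ} (ha : a ∈ A) (hx : dist x a ≤ r) (hρ : 2 * r < ρ)
    (hAB : ∀ y ∈ A, dist y a < ρ → infDist y B ≤ ε) :
    infDist x B ≤ infDist x A + ε := by
  refine le_of_forall_pos_lt_add fun η hη => ?_
  set η' := min η (ρ - 2 * r)
  have hη' : 0 < η' := lt_min hη (by linarith)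
  have hxA : infDist x A ≤ r := (infDist_le_dist_of_mem ha).trans hx
  obtain ⟨y, hyA, hxy⟩ := (infDist_lt_iff ⟨a, ha⟩).mp (lt_add_of_pos_right (infDist x A) hη')
  have hya : dist y a < ρ := calc
    dist y a ≤ dist x y + dist x a := dist_triangle_left _ _ _
    _ < ρ := by linarith [min_le_right η (ρ - 2 * r)]
  calc infDist x B ≤ infDist y B + dist x y := infDist_le_infDist_add_dist
    _ < infDist x A + ε + η := by linarith [hAB y hyA hya, min_le_left η (ρ - 2 * r)]

section awGap

variable {A B : Set (ℝ × ℝ)} {r : ℝ}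

theorem awGap_comm (A B : Set (ℝ × ℝ)) (r : ℝ) : awGap A B r = awGap B A r := by
  simp only [awGap, abs_sub_comm]

theorem awGap_nonneg : 0 ≤ awGap A B r :=
  Real.sSup_nonneg (by rintro _ ⟨x, -, rfl⟩; exact abs_nonneg _)

theorem awGap_le {c : ℝ} (hc : 0 ≤ c)
    (h : ∀ x ∈ closedBall (0 : ℝ × ℝ) r, |infDist x A - infDist x B| ≤ c) : awGap A B r ≤ c :=
  Real.sSup_le (by rintro _ ⟨x, hx, rfl⟩; exact h x hx) hc

theorem infDist_le_awGap {x : ℝ × ℝ} (hxA : x ∈ A) (hx : ‖x‖ ≤ r) :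
    infDist x B ≤ awGap A B r := by
  have hbdd : BddAbove ((fun x => |infDist x A - infDist x B|) '' closedBall (0 : ℝ × ℝ) r) :=
    ((isCompact_closedBall _ _).image
      ((continuous_infDist_pt A).sub (continuous_infDist_pt B)).abs).bddAbove
  calc infDist x B = |infDist x A - infDist x B| := by
        rw [infDist_zero_of_mem hxA, zero_sub, abs_neg, abs_of_nonneg infDist_nonneg]
    _ ≤ awGap A B r := le_csSup hbdd (mem_image_of_mem _ (mem_closedBall_zero_iff.2 hx))

end awGap

theorem abs_log_sub_log_le {a b m : ℝ} (hm : 0 < m) (ha : m ≤ a) (hb : m ≤ b) :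
    |log a - log b| ≤ |a - b| / m := by
  have key : ∀ {a b : ℝ}, m ≤ a → m ≤ b → log a - log b ≤ |a - b| / m := fun {a b} ha hb => by
    have hb0 : 0 < b := hm.trans_le hb
    rw [← log_div (hm.trans_le ha).ne' hb0.ne']
    calc log (a / b) ≤ a / b - 1 := log_le_sub_one_of_pos (div_pos (hm.trans_le ha) hb0)
      _ = (a - b) / b := by field_simp
      _ ≤ |a - b| / b := by gcongr; exact le_abs_self _
      _ ≤ |a - b| / m := by gcongr
  exact abs_sub_le_iff.2 ⟨key ha hb, abs_sub_comm a b ▸ key hb ha⟩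

theorem dist_log_le_of_dist_exp_lt {y z : ℝ × ℝ} {ρ δ : ℝ} (hy : |y.2| ≤ ρ)
    (hδ : δ ≤ exp (-ρ) / 2) (hyz : dist (y.1, exp y.2) z < δ) :
    dist y (z.1, log z.2) ≤ 2 * exp ρ * δ := by
  have h1 : |y.1 - z.1| < δ := (le_max_left _ _).trans_lt hyz
  have h2 : |exp y.2 - z.2| < δ := (le_max_right _ _).trans_lt hyz
  have hexp : exp (-ρ) ≤ exp y.2 := exp_le_exp.2 (neg_le_of_abs_le hy)
  have hz : exp (-ρ) / 2 ≤ z.2 := by linarith [le_abs_self (exp y.2 - z.2)]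
  have hρ : 1 ≤ exp ρ := one_le_exp ((abs_nonneg _).trans hy)
  have hδ0 : 0 < δ := (abs_nonneg _).trans_lt h1
  refine max_le (by rw [Real.dist_eq]; nlinarith) ?_
  calc |y.2 - log z.2| = |log (exp y.2) - log z.2| := by rw [log_exp]
    _ ≤ |exp y.2 - z.2| / (exp (-ρ) / 2) := abs_log_sub_log_le (by positivity) (by linarith) hz
    _ ≤ δ / (exp (-ρ) / 2) := by gcongr
    _ = 2 * exp ρ * δ := by rw [exp_neg]; field_simp

section logE

theorem logE_le_coe_iff {x : EReal} (hx : 0 < x) (b : ℝ) :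
    logE x ≤ b ↔ x ≤ (exp b : ℝ) := by
  by_cases hT : x = ⊤
  · simp [logE, hT]
  · lift x to ℝ using ⟨hT, ne_bot_of_gt hx⟩
    have hx' : 0 < x := EReal.coe_pos.mp hx
    simp only [logE, if_neg hT, if_neg (not_le.mpr hx), EReal.toReal_coe, EReal.coe_le_coe_iff]
    exact log_le_iff_le_exp hx'

theorem logE_one : logE 1 = 0 := by
  simp [logE, show (1 : EReal) ≠ ⊤ from EReal.coe_ne_top 1]

variable {g : ℝ → EReal}

theorem mem_epiE_logE_iff (hg : ∀ θ, 0 < g θ) {p : ℝ × ℝ} :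
    p ∈ epiE (fun θ => logE (g θ)) ↔ (p.1, exp p.2) ∈ epiE g :=
  logE_le_coe_iff (hg p.1) p.2

theorem zero_mem_epiE_logE (hg0 : g 0 = 1) : (0 : ℝ × ℝ) ∈ epiE (fun θ => logE (g θ)) := by
  simp [epiE, hg0, logE_one]

theorem epiE_nonempty (hg0 : g 0 = 1) : (epiE g).Nonempty :=
  ⟨(0, 1), by simp [epiE, hg0]⟩

theorem log_mem_epiE_logE (hg : ∀ θ, 0 < g θ) {p : ℝ × ℝ} (hp : p ∈ epiE g) :
    (p.1, log p.2) ∈ epiE (fun θ => logE (g θ)) := by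
  have hp2 : 0 < p.2 := EReal.coe_pos.mp ((hg p.1).trans_le hp)
  rwa [mem_epiE_logE_iff hg, exp_log hp2]

end logE

section transfer

variable {g h : ℝ → EReal} {δ : ℝ}

theorem infDist_epiE_logE_le (hg : ∀ θ, 0 < g θ) (hh : ∀ θ, 0 < h θ) (hh0 : h 0 = 1) {ρ : ℝ}
    (hδ : δ ≤ exp (-ρ) / 2) (hgap : awGap (epiE g) (epiE h) (exp ρ) < δ) {y : ℝ × ℝ}
    (hy : y ∈ epiE (fun θ => logE (g θ))) (hyρ : ‖y‖ ≤ ρ) :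
    infDist y (epiE (fun θ => logE (h θ))) ≤ 2 * exp ρ * δ := by
  have hy1 : |y.1| ≤ ρ := (norm_fst_le y).trans hyρ
  have hy2 : |y.2| ≤ ρ := (norm_snd_le y).trans hyρ
  have hΦy : ‖((y.1, exp y.2) : ℝ × ℝ)‖ ≤ exp ρ :=
    max_le (by rw [Real.norm_eq_abs]; linarith [add_one_le_exp ρ])
      (by rw [Real.norm_eq_abs, abs_of_pos (exp_pos _)]; exact exp_le_exp.2 (le_of_abs_le hy2))
  obtain ⟨z, hz, hyz⟩ := (infDist_lt_iff (epiE_nonempty hh0)).mp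
    ((infDist_le_awGap ((mem_epiE_logE_iff hg).1 hy) hΦy).trans_lt hgap)
  exact (infDist_le_dist_of_mem (log_mem_epiE_logE hh hz)).trans
    (dist_log_le_of_dist_exp_lt hy2 hδ hyz)

variable {r : ℝ}

theorem infDist_epiE_logE_le_add (hg : ∀ θ, 0 < g θ) (hh : ∀ θ, 0 < h θ) (hg0 : g 0 = 1)
    (hh0 : h 0 = 1) (hδ : δ ≤ exp (-(2 * r + 1)) / 2)
    (hgap : awGap (epiE g) (epiE h) (exp (2 * r + 1)) < δ) {x : ℝ × ℝ}
    (hx : x ∈ closedBall (0 : ℝ × ℝ) r) :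
    infDist x (epiE (fun θ => logE (h θ))) ≤
      infDist x (epiE (fun θ => logE (g θ))) + 2 * exp (2 * r + 1) * δ :=
  infDist_le_infDist_add_of_forall_near (zero_mem_epiE_logE hg0) hx (lt_add_one (2 * r))
    fun y hy hyρ => infDist_epiE_logE_le hg hh hh0 hδ hgap hy (by simpa using hyρ.le)

theorem awGap_epiE_logE_le_of_lt (hg : ∀ θ, 0 < g θ) (hh : ∀ θ, 0 < h θ) (hg0 : g 0 = 1)
    (hh0 : h 0 = 1) (hδ : δ ≤ exp (-(2 * r + 1)) / 2)
    (hgap : awGap (epiE g) (epiE h) (exp (2 * r + 1)) < δ) :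
    awGap (epiE (fun θ => logE (g θ))) (epiE (fun θ => logE (h θ))) r ≤
      2 * exp (2 * r + 1) * δ := by
  have hδ0 : 0 ≤ δ := awGap_nonneg.trans hgap.le
  refine awGap_le (by positivity) fun x hx => abs_sub_le_iff.2 ⟨?_, ?_⟩
  · have := infDist_epiE_logE_le_add hh hg hh0 hg0 hδ (awGap_comm (epiE g) _ _ ▸ hgap) hx
    linarith
  · have := infDist_epiE_logE_le_add hg hh hg0 hh0 hδ hgap hx
    linarith

theorem awGap_epiE_logE_le (hg : ∀ θ, 0 < g θ) (hh : ∀ θ, 0 < h θ) (hg0 : g 0 = 1)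
    (hh0 : h 0 = 1) 
    (hgap : awGap (epiE g) (epiE h) (exp (2 * r + 1)) < exp (-(2 * r + 1)) / 2) :
    awGap (epiE (fun θ => logE (g θ))) (epiE (fun θ => logE (h θ))) r ≤
      2 * exp (2 * r + 1) * awGap (epiE g) (epiE h) (exp (2 * r + 1)) := by
  set C := 2 * exp (2 * r + 1)
  have hC : 0 < C := by positivity
  refine le_of_forall_gt_imp_ge_of_dense fun c hc => ?_
  have hδ : awGap (epiE g) (epiE h) (exp (2 * r + 1)) < min (c / C) (exp (-(2 * r + 1)) / 2) :=
    lt_min ((lt_div_iff₀' hC).2 hc) hgap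
  calc _ ≤ C * min (c / C) (exp (-(2 * r + 1)) / 2) :=
        awGap_epiE_logE_le_of_lt hg hh hg0 hh0 (min_le_right _ _) hδ
    _ ≤ C * (c / C) := by gcongr; exact min_le_left _ _
    _ = c := by field_simp

end transfer

theorem log_continuous_general
    (F : ℕ → ℝ → EReal) (f : ℝ → EReal)
    (hFpos : ∀ n θ, 0 < F n θ) (hF0 : ∀ n, F n 0 = 1)
    (hpos : ∀ θ, 0 < f θ) (h0 : f 0 = 1)
    (haw : AWTendsto F f) :
    AWTendsto (fun n θ => logE (F n θ)) (fun θ => logE (f θ)) := by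
  intro r _
  have hR := haw (exp (2 * r + 1)) (exp_pos _)
  refine squeeze_zero' (Eventually.of_forall fun n => awGap_nonneg)
    ((hR.eventually_lt_const (by positivity)).mono
      fun n hn => awGap_epiE_logE_le (hFpos n) hpos (hF0 n) h0 hn) ?_
  simpa using hR.const_mul (2 * exp (2 * r + 1))

/-- Continuity of the logarithmic operator with respect to Attouch–Wets
convergence. -/
theorem log_continuous
    (F : ℕ → ℝ → EReal) (f : ℝ → EReal)
    (hFlsc : ∀ n, LowerSemicontinuous (F n)) (hFconv : ∀ n, ERConvex (F n))
    (hFpos : ∀ n θ, 0 < F n θ) (hF0 : ∀ n, F n 0 = 1)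
    (hlsc : LowerSemicontinuous f) (hconv : ERConvex f)
    (hpos : ∀ θ, 0 < f θ) (h0 : f 0 = 1)
    (haw : AWTendsto F f) :
    AWTendsto (fun n θ => logE (F n θ)) (fun θ => logE (f θ)) :=
  log_continuous_general F f hFpos hF0 hpos h0 haw

end
end

section
/- Suppose ℙ(X₁ > 0) ∈ (0,1) and ℙ(X₁ < 0) ∈ (0,1). Then I_Lo(x) > 0 for every x ∈ (θ_μ, ∞]. -/
open MeasureTheory Filter Metric Set
open scoped ENNReal Classical

noncomputable section

/-- The Loynes exponent estimator `δ_n = sup {θ : M_n(θ) ≤ 1} ∈ [0,∞]`. -/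
def deltaN {Ω : Type*} (X : ℕ → Ω → ℝ) (n : ℕ) (ω : Ω) : ℝ≥0∞ :=
  sSup (ENNReal.ofReal '' {θ : ℝ | Mn X n ω θ ≤ 1})

/-- `θ_μ = sup {θ : f_μ(θ) ≤ 1} ∈ [0,∞]`. -/
def thetaMu (μ : Measure ℝ) : ℝ≥0∞ := sSup (ENNReal.ofReal '' {θ : ℝ | mgfE μ θ ≤ 1})

/-- The sets `C_x` for `x ∈ [0,∞]`. -/
def CLo (x : ℝ≥0∞) : Set (ℝ → EReal) :=
  {f | (IsAdm0 f ∧ f 0 < ⊤) ∧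
    (if x = 0 then ∀ y : ℝ, 0 < y → 1 ≤ f y
     else if x = ⊤ then ∀ y : ℝ, 0 ≤ y → f y ≤ 1
     else f x.toReal = 1 ∨ (f x.toReal < 1 ∧ ∀ y : ℝ, x.toReal < y → f y = ⊤))}

/-- The Loynes rate function `I_Lo(x) = inf_{f ∈ C_x} I_M(f)`. -/
def ILo {Ω : Type*} [MeasurableSpace Ω] (P : Measure Ω) (X : ℕ → Ω → ℝ)
    (x : ℝ≥0∞) : EReal :=
  ⨅ f ∈ CLo x, IM P X f

/-!
Every `f ∈ C_x` satisfies `f θ ≤ 1` at some `θ > θ_μ`, so `(θ, 1)` lies in its epigraph, and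
`M_n ∈ V_k(f)` forces `M_n(θ') < 1 + 1/k` at some `θ'` with `|θ' - θ| < 1/k`. Since
`f_μ(θ) > 1`, monotone convergence yields `δ, K` such that the bounded minorant
`expEnvelope θ δ K` of all `t ↦ exp (θ' t)` with `|θ' - θ| ≤ δ` still has `μ`-mean `B > 1`.
For `k` large, `M_n ∈ V_k(f)` then forces the empirical mean of `expEnvelope θ δ K (X_i)` to be
at most `(1 + B) / 2 < B`, an event whose probability decays exponentially by Hoeffding's
inequality, at a rate that does not depend on `f`.
-/

open ProbabilityTheory Topology

lemma exists_lt_ofReal_forall_mem_CLo_le_one {y x : ℝ≥0∞} (hyx : y < x) :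
    ∃ θ : ℝ, y < ENNReal.ofReal θ ∧ ∀ f ∈ CLo x, f θ ≤ 1 := by
  have hy : y ≠ ⊤ := hyx.ne_top
  have hx0 : x ≠ 0 := (zero_le.trans_lt hyx).ne'
  by_cases hxt : x = ⊤
  · refine ⟨y.toReal + 1, ?_, fun f hf => ?_⟩
    · exact (ENNReal.lt_ofReal_iff_toReal_lt hy).2 (lt_add_one _)
    · have hcond := hf.2
      rw [if_neg hx0, if_pos hxt] at hcond
      exact hcond _ (by positivity)
  · refine ⟨x.toReal, by rwa [ENNReal.ofReal_toReal hxt], fun f hf => ?_⟩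
    have hcond := hf.2
    rw [if_neg hx0, if_neg hxt] at hcond
    rcases hcond with h | h
    · exact h.le
    · exact h.1.le

lemma one_lt_lintegral_exp_of_thetaMu_lt {μ : Measure ℝ} {θ : ℝ}
    (h : thetaMu μ < ENNReal.ofReal θ) : 1 < ∫⁻ t, ENNReal.ofReal (Real.exp (θ * t)) ∂μ := by
  by_contra! hle
  have hθ : mgfE μ θ ≤ 1 := by
    rw [mgfE, ← EReal.coe_ennreal_one]
    exact EReal.coe_ennreal_le_coe_ennreal_iff.2 hle
  have hle' : ENNReal.ofReal θ ≤ thetaMu μ := le_sSup ⟨θ, hθ, rfl⟩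
  exact hle'.not_gt h

lemma min_exp_mul_le_exp_mul {a b θ : ℝ} (t : ℝ) (ha : a ≤ θ) (hb : θ ≤ b) :
    min (Real.exp (a * t)) (Real.exp (b * t)) ≤ Real.exp (θ * t) := by
  rcases le_total 0 t with ht | ht
  · exact (min_le_left _ _).trans (Real.exp_le_exp.2 (mul_le_mul_of_nonneg_right ha ht))
  · exact (min_le_right _ _).trans (Real.exp_le_exp.2 (mul_le_mul_of_nonpos_right hb ht))

def expEnvelope (θ δ K t : ℝ) : ℝ :=
  min (min (Real.exp ((θ - δ) * t)) (Real.exp ((θ + δ) * t))) K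

section expEnvelope

variable {θ δ K : ℝ}

lemma expEnvelope_le_exp {θ' : ℝ} (h : |θ' - θ| ≤ δ) (t : ℝ) :
    expEnvelope θ δ K t ≤ Real.exp (θ' * t) := by
  rw [abs_le] at h
  exact (min_le_left _ _).trans (min_exp_mul_le_exp_mul t (by linarith) (by linarith))

lemma expEnvelope_mem_Icc (hK : 0 ≤ K) (t : ℝ) : expEnvelope θ δ K t ∈ Icc 0 K :=
  ⟨le_min (le_min (Real.exp_pos _).le (Real.exp_pos _).le) hK, min_le_right _ _⟩

lemma continuous_expEnvelope : Continuous (expEnvelope θ δ K) := by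
  unfold expEnvelope; fun_prop

lemma expEnvelope_mono {δ' K' : ℝ} (hδ' : 0 ≤ δ') (hδ : δ' ≤ δ) (hK : K ≤ K') (t : ℝ) :
    expEnvelope θ δ K t ≤ expEnvelope θ δ' K' t := by
  refine le_min (le_min (expEnvelope_le_exp ?_ t) (expEnvelope_le_exp ?_ t))
    ((min_le_right _ _).trans hK) <;> simp [abs_of_nonneg hδ', hδ]

lemma tendsto_expEnvelope (θ t : ℝ) :
    Tendsto (fun j : ℕ => expEnvelope θ (1 / ((j : ℝ) + 1)) ((j : ℝ) + 1) t) atTop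
      (𝓝 (Real.exp (θ * t))) := by
  set m : ℝ → ℝ := fun δ => min (Real.exp ((θ - δ) * t)) (Real.exp ((θ + δ) * t))
  have hm : Tendsto (fun j : ℕ => m (1 / ((j : ℝ) + 1))) atTop (𝓝 (Real.exp (θ * t))) := by
    have hcont : Continuous m := by fun_prop
    have hm0 : m 0 = Real.exp (θ * t) := by simp [m]
    exact hm0 ▸ (hcont.tendsto 0).comp tendsto_one_div_add_atTop_nhds_zero_nat
  have hbelow : ∀ᶠ j : ℕ in atTop, m (1 / ((j : ℝ) + 1)) ≤ (j : ℝ) + 1 := by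
    filter_upwards [hm.eventually (eventually_lt_nhds (lt_add_one _)),
      tendsto_natCast_atTop_atTop.eventually_ge_atTop (Real.exp (θ * t))] with j h1 h2
    linarith
  exact hm.congr' (hbelow.mono fun j hj => (min_eq_left hj).symm)

lemma exists_one_lt_integral_expEnvelope {μ : Measure ℝ} [IsFiniteMeasure μ]
    (h : 1 < ∫⁻ t, ENNReal.ofReal (Real.exp (θ * t)) ∂μ) :
    ∃ δ > 0, ∃ K > 0, 1 < ∫ t, expEnvelope θ δ K t ∂μ := by
  set g : ℕ → ℝ → ℝ := fun j => expEnvelope θ (1 / ((j : ℝ) + 1)) ((j : ℝ) + 1)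
  have hg_mono : ∀ t, Monotone fun j => g j t := fun t j j' hj =>
    expEnvelope_mono (by positivity) (by gcongr) (by gcongr) t
  have hlim := lintegral_tendsto_of_tendsto_of_monotone (μ := μ)
    (fun j => continuous_expEnvelope.measurable.ennreal_ofReal.aemeasurable)
    (ae_of_all _ fun t j j' hj => ENNReal.ofReal_le_ofReal (hg_mono t hj))
    (ae_of_all _ fun t => (ENNReal.continuous_ofReal.tendsto _).comp (tendsto_expEnvelope θ t))
  obtain ⟨j, hj⟩ := (hlim.eventually (eventually_gt_nhds h)).exists
  refine ⟨1 / ((j : ℝ) + 1), by positivity, (j : ℝ) + 1, by positivity, ?_⟩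
  have hbdd : ∀ t, g j t ∈ Icc 0 ((j : ℝ) + 1) := expEnvelope_mem_Icc (by positivity)
  rw [integral_eq_lintegral_of_nonneg_ae (ae_of_all _ fun t => (hbdd t).1)
    continuous_expEnvelope.aestronglyMeasurable]
  have hfin : ∫⁻ t, ENNReal.ofReal (g j t) ∂μ ≠ ⊤ :=
    ne_top_of_le_ne_top (by rw [lintegral_const]; finiteness)
      (lintegral_mono fun t => ENNReal.ofReal_le_ofReal (hbdd t).2)
  simpa using ENNReal.toReal_strict_mono hfin hj

end expEnvelope

lemma exists_dist_lt_of_awGap_lt {A B : Set (ℝ × ℝ)} {r ε : ℝ} (hA : A.Nonempty)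
    (hgap : awGap A B r < ε) {p : ℝ × ℝ} (hpB : p ∈ B) (hpr : p ∈ closedBall 0 r) :
    ∃ w ∈ A, dist p w < ε := by
  have hbdd : BddAbove ((fun y => |infDist y A - infDist y B|) '' closedBall 0 r) :=
    (isCompact_closedBall _ _).bddAbove_image
      ((continuous_infDist_pt A).sub (continuous_infDist_pt B)).abs.continuousOn
  have hp : infDist p A ≤ awGap A B r := by
    simpa [awGap, infDist_zero_of_mem hpB, abs_of_nonneg infDist_nonneg]
      using le_csSup hbdd (mem_image_of_mem _ hpr)
  exact (infDist_lt_iff hA).1 (hp.trans_lt hgap)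

lemma epiE_coe_nonempty (φ : ℝ → ℝ) : (epiE fun θ => (φ θ : EReal)).Nonempty :=
  ⟨(0, φ 0), show (φ 0 : EReal) ≤ φ 0 from le_rfl⟩

lemma sum_expEnvelope_le_of_Mn_mem_Vk {Ω : Type*} {X : ℕ → Ω → ℝ} {f : ℝ → EReal}
    {θ δ K c : ℝ} {k n : ℕ} {ω : Ω} (hf : f θ ≤ 1) (hθk : |θ| ≤ k) (hk : 1 ≤ k)
    (hkδ : 1 / (k : ℝ) ≤ δ) (hkc : 1 + 1 / (k : ℝ) ≤ c) (hn : 0 < n)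
    (hω : Mn X n ω ∈ Vk k f) :
    ∑ i ∈ Finset.range n, expEnvelope θ δ K (X i ω) ≤ n * c := by
  have hpf : ((θ, 1) : ℝ × ℝ) ∈ epiE f := by simpa [epiE] using hf
  have hpk : ((θ, 1) : ℝ × ℝ) ∈ closedBall 0 k := by
    simpa [Prod.dist_eq, Real.dist_eq] using ⟨hθk, hk⟩
  obtain ⟨w, hw, hdist⟩ := exists_dist_lt_of_awGap_lt (epiE_coe_nonempty _) hω hpf hpk
  obtain ⟨hθw, h1w⟩ : |θ - w.1| < 1 / k ∧ |1 - w.2| < 1 / k := by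
    simpa [Prod.dist_eq, Real.dist_eq] using hdist
  have hMn : (n : ℝ)⁻¹ * ∑ i ∈ Finset.range n, Real.exp (w.1 * X i ω) ≤ c :=
    (EReal.coe_le_coe_iff.1 hw).trans (by linarith [(abs_lt.1 h1w).1])
  calc ∑ i ∈ Finset.range n, expEnvelope θ δ K (X i ω)
      ≤ ∑ i ∈ Finset.range n, Real.exp (w.1 * X i ω) :=
        Finset.sum_le_sum fun i _ =>
          expEnvelope_le_exp ((abs_sub_comm _ _).trans_le (hθw.le.trans hkδ)) _
    _ ≤ n * c := (inv_mul_le_iff₀ (by positivity)).1 hMn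

section Hoeffding

variable {Ω : Type*} [MeasurableSpace Ω] {P : Measure Ω} [IsProbabilityMeasure P]
  {X : ℕ → Ω → ℝ} {μ : Measure ℝ}

omit [IsProbabilityMeasure P] in
lemma integral_comp_eq_of_map_eq {i : ℕ} (hmeas : Measurable (X i))
    (hid : Measure.map (X i) P = μ) {h : ℝ → ℝ} (hh : Measurable h) :
    ∫ ω, h (X i ω) ∂P = ∫ t, h t ∂μ := by
  rw [← hid, integral_map hmeas.aemeasurable hh.aestronglyMeasurable]

lemma measureReal_sum_comp_le_le_exp (hmeas : ∀ i, Measurable (X i))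
    (hid : ∀ i, Measure.map (X i) P = μ) (hindep : iIndepFun X P)
    {h : ℝ → ℝ} (hh : Measurable h) {a b c : ℝ} (hab : ∀ t, h t ∈ Icc a b)
    (hc : c ≤ ∫ t, h t ∂μ) (n : ℕ) :
    P.real {ω | ∑ i ∈ Finset.range n, h (X i ω) ≤ n * c} ≤
      Real.exp (-(n * (2 * (∫ t, h t ∂μ - c) ^ 2 / (b - a) ^ 2))) := by
  set B := ∫ t, h t ∂μ
  have hsubG : ∀ i, HasSubgaussianMGF (fun ω => B - h (X i ω)) ((‖b - a‖₊ / 2) ^ 2) P := by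
    intro i
    have := hasSubgaussianMGF_of_mem_Icc (μ := P) (X := fun ω => -h (X i ω))
      (hh.comp (hmeas i)).neg.aemeasurable
      (ae_of_all _ fun ω => ⟨neg_le_neg (hab _).2, neg_le_neg (hab _).1⟩)
    simpa only [integral_neg, integral_comp_eq_of_map_eq (hmeas i) (hid i) hh, sub_neg_eq_add,
      neg_add_eq_sub] using this
  have hindep' : iIndepFun (fun i ω => B - h (X i ω)) P :=
    hindep.comp (fun _ t => B - h t) fun _ => measurable_const.sub hh
  have hevent : {ω | ∑ i ∈ Finset.range n, h (X i ω) ≤ n * c} =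
      {ω | n * (B - c) ≤ ∑ i ∈ Finset.range n, (B - h (X i ω))} := by
    ext ω
    simp only [mem_ofPred_eq, Finset.sum_sub_distrib, Finset.sum_const, Finset.card_range,
      nsmul_eq_mul]
    constructor <;> intro <;> linarith
  have hexp : -((n : ℝ) * (B - c)) ^ 2 / (2 * n * ((‖b - a‖₊ / 2) ^ 2 : NNReal)) =
      -(n * (2 * (B - c) ^ 2 / (b - a) ^ 2)) := by
    push_cast
    rw [Real.norm_eq_abs, div_pow, sq_abs]
    rcases eq_or_ne (n : ℝ) 0 with hn | hn
    · simp [hn]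
    rcases eq_or_ne (b - a) 0 with hba | hba
    · simp [hba]
    field_simp
  rw [hevent, ← hexp]
  exact HasSubgaussianMGF.measure_sum_range_ge_le_of_iIndepFun (n := n) hindep'
    (fun i _ => hsubG i) (mul_nonneg n.cast_nonneg (sub_nonneg.2 hc))

end Hoeffding

lemma inv_mul_elog_le_of_toReal_le_exp {p : ℝ≥0∞} (hp : p ≠ ⊤) {n : ℕ} (hn : 0 < n) {r : ℝ}
    (h : p.toReal ≤ Real.exp (-(n * r))) :
    (((n : ℝ)⁻¹ : ℝ) : EReal) * elog p ≤ ((-r : ℝ) : EReal) := by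
  unfold elog
  split_ifs with hp0
  · rw [EReal.coe_mul_bot_of_pos (by positivity)]
    exact bot_le
  · have hlog : Real.log p.toReal ≤ -(n * r) :=
      (Real.log_le_iff_le_exp (ENNReal.toReal_pos hp0 hp)).2 h
    rw [← EReal.coe_mul, EReal.coe_le_coe_iff, inv_mul_le_iff₀ (by positivity)]
    linarith

lemma le_IM_of_measure_le_exp {Ω : Type*} [MeasurableSpace Ω] {P : Measure Ω}
    [IsFiniteMeasure P] {X : ℕ → Ω → ℝ} {f : ℝ → EReal} {k : ℕ} (hk : 1 ≤ k) {r : ℝ}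
    (h : ∀ n, 0 < n → (P {ω | Mn X n ω ∈ Vk k f}).toReal ≤ Real.exp (-(n * r))) :
    (r : EReal) ≤ IM P X f := by
  rw [IM, ← neg_neg r, EReal.coe_neg, EReal.neg_le_neg_iff]
  refine iInf₂_le_of_le k hk (limsup_le_of_le (by isBoundedDefault) ?_)
  filter_upwards [eventually_gt_atTop 0] with n hn
  exact inv_mul_elog_le_of_toReal_le_exp (measure_ne_top _ _) hn (h n hn)

theorem ILo_positive_general
    {Ω : Type*} [MeasurableSpace Ω] (P : Measure Ω) [IsProbabilityMeasure P]
    (X : ℕ → Ω → ℝ) (μ : Measure ℝ) [IsProbabilityMeasure μ]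
    (hmeas : ∀ i, Measurable (X i))
    (hid : ∀ i, Measure.map (X i) P = μ)
    (hindep : ProbabilityTheory.iIndepFun X P) :
    ∀ x : ℝ≥0∞, thetaMu μ < x → 0 < ILo P X x := by
  intro x hx
  obtain ⟨θ, hθμ, hCLo⟩ := exists_lt_ofReal_forall_mem_CLo_le_one hx
  obtain ⟨δ, hδ, K, hK, hB⟩ :=
    exists_one_lt_integral_expEnvelope (one_lt_lintegral_exp_of_thetaMu_lt hθμ)
  set B := ∫ t, expEnvelope θ δ K t ∂μ
  set c := (1 + B) / 2
  set r := 2 * (B - c) ^ 2 / K ^ 2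
  have hr : 0 < r := by
    have : B - c ≠ 0 := by simp only [c]; linarith
    positivity
  have hinv := tendsto_one_div_atTop_nhds_zero_nat (𝕜 := ℝ)
  obtain ⟨k, hθk, hk, hkδ, hkc⟩ := ((tendsto_natCast_atTop_atTop.eventually_ge_atTop |θ|).and
    ((eventually_ge_atTop 1).and ((hinv.eventually (eventually_le_nhds hδ)).and
      (hinv.eventually (eventually_le_nhds (show 0 < c - 1 by simp only [c]; linarith)))))).exists
  refine (EReal.coe_pos.2 hr).trans_le (le_iInf₂ fun f hf => le_IM_of_measure_le_exp hk ?_)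
  intro n hn
  calc (P {ω | Mn X n ω ∈ Vk k f}).toReal
      ≤ P.real {ω | ∑ i ∈ Finset.range n, expEnvelope θ δ K (X i ω) ≤ n * c} :=
        measureReal_mono fun ω hω => sum_expEnvelope_le_of_Mn_mem_Vk (hCLo f hf) hθk hk hkδ
          (by linarith) hn hω
    _ ≤ Real.exp (-(n * r)) := by
        simpa only [sub_zero] using measureReal_sum_comp_le_le_exp hmeas hid hindep
          continuous_expEnvelope.measurable (expEnvelope_mem_Icc hK.le)
          (by simp only [c]; linarith) n

/-- `I_Lo` is strictly positive on `(θ_μ, ∞]`. -/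
theorem ILo_positive
    {Ω : Type*} [MeasurableSpace Ω] (P : Measure Ω) [IsProbabilityMeasure P]
    (X : ℕ → Ω → ℝ) (μ : Measure ℝ) [IsProbabilityMeasure μ]
    (hmeas : ∀ i, Measurable (X i))
    (hid : ∀ i, Measure.map (X i) P = μ)
    (hindep : ProbabilityTheory.iIndepFun X P)
    (hpos : μ (Set.Ioi (0 : ℝ)) ∈ Set.Ioo (0 : ℝ≥0∞) 1)
    (hneg : μ (Set.Iio (0 : ℝ)) ∈ Set.Ioo (0 : ℝ≥0∞) 1) :
    ∀ x : ℝ≥0∞, thetaMu μ < x → 0 < ILo P X x :=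
  ILo_positive_general P X μ hmeas hid hindep

end
end
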